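/- arXiv:2512.03149 — 6 statements merged into one kernel-verified Lean document; each statement's English description precedes it below -/
import Mathlib

section
/- Let m be a positive integer, let z₁, …, z_m be distinct complex numbers with Im(z_l) > 0 for each l, and let w₁, …, w_m ∈ ℂ satisfy the Vandermonde moment conditions Σ_{l=1}^m w_l z_l^j = δ_{j0} for j = 0, 1, …, m − 1 (i.e., the sum equals 1 for j = 0 and 0 for j = 1, …, m − 1). Define K : ℝ → ℝ by K(x) = −(1/π) Σ_{l=1}^m Im(w_l/(x + z_l)). Then K is Lebesgue integrable on ℝ and ∫_ℝ K(x) dx = 1. -/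
/-!
Since `∑ l, w l = 1` (the moment condition for `j = 0`),
`∑ w_l / (x + z_l) = 1 / (x + i) + ∑ w_l (1 / (x + z_l) - 1 / (x + i))`.
The first term contributes `-(1/π) Im (1 / (x + i)) = 1 / (π (1 + x²))`, the standard Cauchy
density, of integral `1`. A difference `1 / (x + z) - 1 / (x + z')` of two poles in the upper
half-plane is `O(x⁻²)`, hence integrable, and it is the derivative of `log ((x + z) / (x + z'))`:
the quotient of two points of the upper half-plane never lies on `(-∞, 0]`, so the principal
logarithm is differentiable there, and it tends to `log 1 = 0` at both ends of the real line.
Hence each difference integrates to `0`.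
-/

open MeasureTheory Complex Filter Topology Bornology ProbabilityTheory

namespace Complex

variable {z z' : ℂ}

lemma ofReal_add_ne_zero_of_im_pos (hz : 0 < z.im) (x : ℝ) : (x : ℂ) + z ≠ 0 := by
  intro h
  have := congrArg im h
  simp only [add_im, ofReal_im, zero_add, zero_im] at this
  exact hz.ne' this

lemma div_mem_slitPlane_of_im_pos {u v : ℂ} (hu : 0 < u.im) (hv : 0 < v.im) :
    u / v ∈ slitPlane := by
  rw [mem_slitPlane_iff_not_le_zero, le_def]
  rintro ⟨hre, him⟩
  have hv0 : v ≠ 0 := fun h => by simp [h] at hv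
  have := congrArg im (div_mul_cancel₀ u hv0)
  simp only [zero_im, zero_re] at him hre
  simp only [mul_im, him, zero_mul, add_zero] at this
  nlinarith

lemma integrable_inv_norm_ofReal_add_sq (hz : 0 < z.im) :
    Integrable fun x : ℝ => ‖(x : ℂ) + z‖⁻¹ ^ 2 := by
  have hcauchy := ((integrable_inv_one_add_sq.comp_div hz.ne').comp_add_right z.re).const_mul
    (z.im ^ 2)⁻¹
  refine hcauchy.congr (.of_forall fun x => ?_)
  simp only [inv_pow, Complex.sq_norm, normSq_apply, add_re, ofReal_re, add_im, ofReal_im,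
    zero_add]
  field_simp
  ring

lemma norm_inv_ofReal_add_sub_inv_ofReal_add_le (hz : 0 < z.im) (hz' : 0 < z'.im) (x : ℝ) :
    ‖((x : ℂ) + z)⁻¹ - ((x : ℂ) + z')⁻¹‖ ≤
      ‖z' - z‖ * (‖(x : ℂ) + z‖⁻¹ ^ 2 + ‖(x : ℂ) + z'‖⁻¹ ^ 2) := by
  have h := ofReal_add_ne_zero_of_im_pos hz x
  have h' := ofReal_add_ne_zero_of_im_pos hz' x
  have hdiff : ((x : ℂ) + z)⁻¹ - ((x : ℂ) + z')⁻¹ =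
      (z' - z) * (((x : ℂ) + z)⁻¹ * ((x : ℂ) + z')⁻¹) := by
    field_simp
    ring
  rw [hdiff, norm_mul, norm_mul, norm_inv, norm_inv]
  gcongr
  have hprod : 0 ≤ ‖(x : ℂ) + z‖⁻¹ * ‖(x : ℂ) + z'‖⁻¹ := by positivity
  linarith [two_mul_le_add_sq ‖(x : ℂ) + z‖⁻¹ ‖(x : ℂ) + z'‖⁻¹]

lemma integrable_inv_ofReal_add_sub_inv_ofReal_add (hz : 0 < z.im) (hz' : 0 < z'.im) :
    Integrable fun x : ℝ => ((x : ℂ) + z)⁻¹ - ((x : ℂ) + z')⁻¹ := by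
  refine Integrable.mono' (((integrable_inv_norm_ofReal_add_sq hz).add
    (integrable_inv_norm_ofReal_add_sq hz')).const_mul ‖z' - z‖) ?_
    (.of_forall (norm_inv_ofReal_add_sub_inv_ofReal_add_le hz hz'))
  have hcont (z : ℂ) (hz : 0 < z.im) : Continuous fun x : ℝ => ((x : ℂ) + z)⁻¹ :=
    (continuous_ofReal.add continuous_const).inv₀ (ofReal_add_ne_zero_of_im_pos hz)
  exact ((hcont z hz).sub (hcont z' hz')).aestronglyMeasurable

lemma hasDerivAt_log_div_ofReal_add (hz : 0 < z.im) (hz' : 0 < z'.im) (x : ℝ) :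
    HasDerivAt (fun t : ℝ => log (((t : ℂ) + z) / ((t : ℂ) + z')))
      (((x : ℂ) + z)⁻¹ - ((x : ℂ) + z')⁻¹) x := by
  have hadd (c : ℂ) : HasDerivAt (fun t : ℝ => (t : ℂ) + c) 1 x :=
    (ofRealCLM.hasDerivAt (x := x)).add_const c
  have hlog := ((hadd z).div (hadd z') (ofReal_add_ne_zero_of_im_pos hz' x)).clog_real
    (div_mem_slitPlane_of_im_pos (by simpa using hz) (by simpa using hz'))
  refine hlog.congr_deriv ?_
  have h := ofReal_add_ne_zero_of_im_pos hz x
  have h' := ofReal_add_ne_zero_of_im_pos hz' x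
  simp only [Pi.div_apply]
  field_simp

lemma tendsto_log_div_add_cobounded (z z' : ℂ) :
    Tendsto (fun u : ℂ => log ((u + z) / (u + z'))) (cobounded ℂ) (𝓝 0) := by
  have hinv : Tendsto (fun u : ℂ => (u + z')⁻¹) (cobounded ℂ) (𝓝 0) :=
    tendsto_inv₀_cobounded.comp (tendsto_add_const_cobounded z')
  have hratio : Tendsto (fun u : ℂ => (u + z) / (u + z')) (cobounded ℂ) (𝓝 1) := by
    have h := (hinv.const_mul (z - z')).const_add 1
    rw [mul_zero, add_zero] at h
    refine h.congr' ?_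
    filter_upwards [(tendsto_add_const_cobounded z').eventually (eventually_ne_cobounded 0)]
      with u hu
    field_simp
    ring
  have hlog := (continuousAt_clog one_mem_slitPlane).tendsto.comp hratio
  rwa [log_one] at hlog

lemma integral_inv_ofReal_add_sub_inv_ofReal_add (hz : 0 < z.im) (hz' : 0 < z'.im) :
    ∫ x : ℝ, (((x : ℂ) + z)⁻¹ - ((x : ℂ) + z')⁻¹) = 0 := by
  simpa using integral_of_hasDerivAt_of_tendsto (hasDerivAt_log_div_ofReal_add hz hz')
    (integrable_inv_ofReal_add_sub_inv_ofReal_add hz hz')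
    ((tendsto_log_div_add_cobounded z z').comp (RCLike.tendsto_ofReal_atBot_cobounded ℂ))
    ((tendsto_log_div_add_cobounded z z').comp (RCLike.tendsto_ofReal_atTop_cobounded ℂ))

lemma neg_inv_pi_mul_im_inv_ofReal_add_I (x : ℝ) :
    -(1 / Real.pi) * (((x : ℂ) + I)⁻¹).im = cauchyPDFReal 0 1 x := by
  simp [cauchyPDFReal_def, inv_im, normSq_apply]
  ring

end Complex

theorem rational_kernel_integrable_and_normalized_general
    (m : ℕ) (hm : 0 < m)
    (z w : Fin m → ℂ)
    (hz_upper : ∀ l, 0 < (z l).im)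
    (hmom : ∀ j : ℕ, j < m → ∑ l, w l * z l ^ j = if j = 0 then 1 else 0)
    (K : ℝ → ℝ)
    (hK : ∀ x : ℝ, K x = -(1 / Real.pi) * ∑ l, (w l / ((x : ℂ) + z l)).im) :
    Integrable K ∧ ∫ x, K x = 1 := by
  have hw : ∑ l, w l = 1 := by simpa using hmom 0 hm
  set G : ℝ → ℂ := fun x => ∑ l, w l * (((x : ℂ) + z l)⁻¹ - ((x : ℂ) + I)⁻¹)
  have hG_int : Integrable G := integrable_finsetSum _ fun l _ =>
    (integrable_inv_ofReal_add_sub_inv_ofReal_add (hz_upper l) (by simp)).const_mul _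
  have hG_zero : ∫ x, G x = 0 := by
    rw [integral_finsetSum _ fun l _ =>
      (integrable_inv_ofReal_add_sub_inv_ofReal_add (hz_upper l) (by simp)).const_mul _]
    refine Finset.sum_eq_zero fun l _ => ?_
    rw [integral_const_mul, integral_inv_ofReal_add_sub_inv_ofReal_add (hz_upper l) (by simp),
      mul_zero]
  obtain rfl : K = fun x => cauchyPDFReal 0 1 x - (1 / Real.pi) * (G x).im := by
    funext x
    have hsplit : ∑ l, w l / ((x : ℂ) + z l) = ((x : ℂ) + I)⁻¹ + G x := by
      simp [G, mul_sub, Finset.sum_sub_distrib, ← Finset.sum_mul, hw, div_eq_mul_inv]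
    rw [hK, ← im_sum, hsplit, add_im, ← neg_inv_pi_mul_im_inv_ofReal_add_I]
    ring
  have hG_im : Integrable fun x => (G x).im := hG_int.im
  refine ⟨(integrable_cauchyPDFReal 0).sub (hG_im.const_mul _), ?_⟩
  have hG_im_zero : ∫ x, (G x).im = 0 := by simpa [hG_zero] using integral_im hG_int
  rw [integral_sub (integrable_cauchyPDFReal 0) (hG_im.const_mul _), integral_const_mul,
    hG_im_zero, integral_cauchyPDFReal_eq_one 0 one_ne_zero, mul_zero, sub_zero]

/-- **Normalization of the rational high-order kernel.**
For distinct poles `z₁, …, z_m` in the open upper half-plane and weights `w₁, …, w_m`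
satisfying the Vandermonde moment conditions `Σ_l w_l z_l^j = δ_{j0}` for
`j = 0, …, m − 1`, the kernel `K(x) = −(1/π) Σ_l Im(w_l/(x + z_l))` is Lebesgue
integrable on `ℝ` and `∫ K = 1`. -/
theorem rational_kernel_integrable_and_normalized
    (m : ℕ) (hm : 0 < m)
    (z w : Fin m → ℂ)
    (hz_distinct : Function.Injective z)
    (hz_upper : ∀ l, 0 < (z l).im)
    (hmom : ∀ j : ℕ, j < m → ∑ l, w l * z l ^ j = if j = 0 then 1 else 0)
    (K : ℝ → ℝ)
    (hK : ∀ x : ℝ, K x = -(1 / Real.pi) * ∑ l, (w l / ((x : ℂ) + z l)).im) :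
    Integrable K ∧ ∫ x, K x = 1 :=
  rational_kernel_integrable_and_normalized_general m hm z w hz_upper hmom K hK
end

section
/- Let m be a positive integer, let z₁, …, z_m be distinct complex numbers with Im(z_l) > 0 for each l, and let w₁, …, w_m ∈ ℂ satisfy the Vandermonde moment conditions Σ_{l=1}^m w_l z_l^j = δ_{j0} for j = 0, 1, …, m − 1. Define K : ℝ → ℝ by K(x) = −(1/π) Σ_{l=1}^m Im(w_l/(x + z_l)). Then there exists a constant C > 0 such that |K(x)| ≤ C/(1 + |x|)^{m+1} for all x ∈ ℝ. -/
/-!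
Expanding `1 / (x + z)` geometrically at infinity to order `m`, the moment conditions cancel every
term of `Σ_l w_l / (x + z_l)` except `1 / x`, which is real on the real axis. Hence the imaginary
part equals that of the remainder `x⁻ᵐ Σ_l w_l (-z_l)ᵐ / (x + z_l) = O(|x|^{-(m+1)})`. Near the
origin the sum is bounded because the poles stay at distance `Im z_l > 0` from the real axis.
-/

open Complex Finset

theorem one_div_add_eq_geom_sum_add {K : Type*} [Field K] {x : K} (z : K) (hx : x ≠ 0)
    (hxz : x + z ≠ 0) (n : ℕ) :
    1 / (x + z) = ∑ j ∈ range n, (-z) ^ j / x ^ (j + 1) + (-z) ^ n / (x + z) / x ^ n := by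
  induction n with
  | zero => simp
  | succ n ih =>
    rw [sum_range_succ, ih]
    field_simp
    ring

theorem sum_div_add_eq_sum_moment_div_add {ι K : Type*} [Fintype ι] [Field K] (w z : ι → K)
    {x : K} (hx : x ≠ 0) (hxz : ∀ l, x + z l ≠ 0) (n : ℕ) :
    ∑ l, w l / (x + z l) = ∑ j ∈ range n, (∑ l, w l * (-z l) ^ j) / x ^ (j + 1) +
      (∑ l, w l * (-z l) ^ n / (x + z l)) / x ^ n := by
  simp_rw [div_eq_mul_one_div (w _), one_div_add_eq_geom_sum_add _ hx (hxz _) n, mul_add,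
    sum_add_distrib, mul_sum, sum_div]
  rw [sum_comm]
  congr 1
  · exact sum_congr rfl fun _ _ => sum_congr rfl fun _ _ => by ring
  · exact sum_congr rfl fun _ _ => by ring

theorem ofReal_add_ne_zero_of_im_ne_zero {z : ℂ} (hz : z.im ≠ 0) (x : ℝ) : (x : ℂ) + z ≠ 0 :=
  fun h => hz (by simpa using congrArg Complex.im h)

theorem im_sum_div_ofReal_add_of_moments {ι : Type*} [Fintype ι] {w z : ι → ℂ} {n : ℕ}
    (hmom : ∀ j < n, ∑ l, w l * z l ^ j = if j = 0 then 1 else 0) {x : ℝ} (hx : x ≠ 0)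
    (hz : ∀ l, (z l).im ≠ 0) :
    (∑ l, w l / ((x : ℂ) + z l)).im =
      ((∑ l, w l * (-z l) ^ n / ((x : ℂ) + z l)) / (x : ℂ) ^ n).im := by
  rw [sum_div_add_eq_sum_moment_div_add w z (ofReal_ne_zero.mpr hx)
    (fun l => ofReal_add_ne_zero_of_im_ne_zero (hz l) x), add_im, im_sum, add_eq_right]
  refine sum_eq_zero fun j hj => ?_
  have hmoment : ∑ l, w l * (-z l) ^ j = (-1) ^ j * ∑ l, w l * z l ^ j := by
    rw [mul_sum]
    exact sum_congr rfl fun l _ => by rw [neg_pow]; ring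
  rw [hmoment, hmom j (mem_range.mp hj)]
  split_ifs with h0 <;> simp [h0]

theorem exists_one_add_abs_le_mul_norm_ofReal_add {z : ℂ} (hz : 0 < z.im) :
    ∃ D, ∀ x : ℝ, 1 + |x| ≤ D * ‖(x : ℂ) + z‖ := by
  refine ⟨(1 + |z.re| + z.im) / z.im, fun x => ?_⟩
  have him : z.im ≤ ‖(x : ℂ) + z‖ := by
    simpa [abs_of_pos hz] using abs_im_le_norm ((x : ℂ) + z)
  have hre : |x + z.re| ≤ ‖(x : ℂ) + z‖ := by
    simpa using abs_re_le_norm ((x : ℂ) + z)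
  have hx : |x| ≤ |x + z.re| + |z.re| := by
    simpa using abs_sub (x + z.re) z.re
  rw [div_mul_eq_mul_div, le_div_iff₀ hz]
  nlinarith [mul_le_mul_of_nonneg_left him (by positivity : (0 : ℝ) ≤ 1 + |z.re|)]

theorem exists_norm_sum_div_ofReal_add_mul_le {ι : Type*} [Fintype ι] {z : ι → ℂ}
    (hz : ∀ l, 0 < (z l).im) (a : ι → ℂ) :
    ∃ B, ∀ x : ℝ, ‖∑ l, a l / ((x : ℂ) + z l)‖ * (1 + |x|) ≤ B := by
  choose D hD using fun l => exists_one_add_abs_le_mul_norm_ofReal_add (hz l)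
  refine ⟨∑ l, ‖a l‖ * D l, fun x => ?_⟩
  refine (mul_le_mul_of_nonneg_right (norm_sum_le _ _) (by positivity)).trans ?_
  rw [sum_mul]
  refine sum_le_sum fun l _ => ?_
  have hpos : 0 < ‖(x : ℂ) + z l‖ :=
    norm_pos_iff.mpr (ofReal_add_ne_zero_of_im_ne_zero (hz l).ne' x)
  calc ‖a l / ((x : ℂ) + z l)‖ * (1 + |x|)
      ≤ ‖a l‖ / ‖(x : ℂ) + z l‖ * (D l * ‖(x : ℂ) + z l‖) := by
        rw [norm_div]; gcongr; exact hD l x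
    _ = ‖a l‖ * D l := by field_simp

theorem exists_abs_im_sum_div_ofReal_add_mul_le {ι : Type*} [Fintype ι] {w z : ι → ℂ} {n : ℕ}
    (hz : ∀ l, 0 < (z l).im)
    (hmom : ∀ j < n, ∑ l, w l * z l ^ j = if j = 0 then 1 else 0) :
    ∃ C, ∀ x : ℝ, |(∑ l, w l / ((x : ℂ) + z l)).im| * (1 + |x|) ^ (n + 1) ≤ C := by
  obtain ⟨B, hB⟩ := exists_norm_sum_div_ofReal_add_mul_le hz w
  obtain ⟨A, hA⟩ := exists_norm_sum_div_ofReal_add_mul_le hz fun l => w l * (-z l) ^ n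
  refine ⟨2 ^ n * max A B, fun x => ?_⟩
  rcases le_or_gt |x| 1 with hx | hx
  · calc |(∑ l, w l / ((x : ℂ) + z l)).im| * (1 + |x|) ^ (n + 1)
        ≤ ‖∑ l, w l / ((x : ℂ) + z l)‖ * (1 + |x|) * 2 ^ n := by
          rw [pow_succ', ← mul_assoc]
          gcongr
          · exact abs_im_le_norm _
          · linarith
      _ ≤ 2 ^ n * max A B := by
          rw [mul_comm]; gcongr; exact (hB x).trans (le_max_right A B)
  · have hx0 : 0 < |x| := one_pos.trans hx
    rw [im_sum_div_ofReal_add_of_moments hmom (abs_pos.mp hx0) fun l => (hz l).ne']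
    calc |((∑ l, w l * (-z l) ^ n / ((x : ℂ) + z l)) / (x : ℂ) ^ n).im| * (1 + |x|) ^ (n + 1)
        ≤ ‖∑ l, w l * (-z l) ^ n / ((x : ℂ) + z l)‖ / |x| ^ n * ((1 + |x|) * (2 * |x|) ^ n) := by
          rw [pow_succ']
          gcongr
          · simpa [norm_div] using abs_im_le_norm
              ((∑ l, w l * (-z l) ^ n / ((x : ℂ) + z l)) / (x : ℂ) ^ n)
          · linarith
      _ = 2 ^ n * (‖∑ l, w l * (-z l) ^ n / ((x : ℂ) + z l)‖ * (1 + |x|)) := by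
          field_simp
          ring
      _ ≤ 2 ^ n * max A B := by gcongr; exact (hA x).trans (le_max_left A B)

theorem rational_kernel_decay_general
    (m : ℕ)
    (z w : Fin m → ℂ)
    (hz_upper : ∀ l, 0 < (z l).im)
    (hmom : ∀ j : ℕ, j < m → ∑ l, w l * z l ^ j = if j = 0 then 1 else 0)
    (K : ℝ → ℝ)
    (hK : ∀ x : ℝ, K x = -(1 / Real.pi) * ∑ l, (w l / ((x : ℂ) + z l)).im) :
    ∃ C > 0, ∀ x : ℝ, |K x| ≤ C / (1 + |x|) ^ (m + 1) := by
  obtain ⟨C, hC⟩ := exists_abs_im_sum_div_ofReal_add_mul_le hz_upper hmom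
  refine ⟨(|C| + 1) / Real.pi, by positivity, fun x => ?_⟩
  rw [hK x, le_div_iff₀ (by positivity), abs_mul, abs_neg,
    abs_of_pos (by positivity : 0 < 1 / Real.pi), ← im_sum]
  calc 1 / Real.pi * |(∑ l, w l / ((x : ℂ) + z l)).im| * (1 + |x|) ^ (m + 1)
      = |(∑ l, w l / ((x : ℂ) + z l)).im| * (1 + |x|) ^ (m + 1) / Real.pi := by ring
    _ ≤ (|C| + 1) / Real.pi := by gcongr; linarith [hC x, le_abs_self C]

/-- **Decay of the rational high-order kernel.**
For distinct poles `z₁, …, z_m` in the open upper half-plane and weights `w₁, …, w_m`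
satisfying the Vandermonde moment conditions `Σ_l w_l z_l^j = δ_{j0}` for
`j = 0, …, m − 1`, the kernel `K(x) = −(1/π) Σ_l Im(w_l/(x + z_l))` satisfies
`|K(x)| ≤ C/(1 + |x|)^{m+1}` for some `C > 0` and all real `x`. -/
theorem rational_kernel_decay
    (m : ℕ) (hm : 0 < m)
    (z w : Fin m → ℂ)
    (hz_distinct : Function.Injective z)
    (hz_upper : ∀ l, 0 < (z l).im)
    (hmom : ∀ j : ℕ, j < m → ∑ l, w l * z l ^ j = if j = 0 then 1 else 0)
    (K : ℝ → ℝ)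
    (hK : ∀ x : ℝ, K x = -(1 / Real.pi) * ∑ l, (w l / ((x : ℂ) + z l)).im) :
    ∃ C > 0, ∀ x : ℝ, |K x| ≤ C / (1 + |x|) ^ (m + 1) :=
  rational_kernel_decay_general m z w hz_upper hmom K hK
end

section
/- Let ρ : [−1, 1] → ℝ be a function such that the function ρ̃(E') := π√(1 − E'²) ρ(E') is twice continuously differentiable on [−1, 1]. Fix E ∈ (−1, 1). Then there exists a constant C > 0 such that for every integer p ≥ 3, |∫_{−1}^{1} k_p^J(E, E') ρ(E') dE' − ρ(E)| ≤ C p^{−2}, where k_p^J is the Jackson kernel of order p. -/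
/-!
Writing `E = cos α` and `E' = cos θ`, the Jackson kernel becomes
`(K_p (α - θ) + K_p (α + θ)) / (2π sin α)` with `K_p x = g₀ + 2 ∑_{k ≥ 1} g_k cos (k x)`.
The Jackson weights are, up to the factor `(p + 1) / 2`, the autocorrelations of
`a_m = sin ((m + 1) π / (p + 1))`, so `K_p` is a nonnegative multiple of `|∑ a_m e^{i m x}|²`;
it is even, has mass `2π` on `[-π, π]`, and `∫ K_p cos = 2π cos (π / (p + 1))`.
The KPM integral is therefore the convolution of `f = ρ̃ ∘ cos` with this approximate identity.
Expanding `f` to second order at `α`, the linear term integrates to zero and the remainder is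
at most `M x² ≤ M π² (1 - cos x) / 2`, so the error is `O(1 - cos (π / (p + 1))) = O(p⁻²)`.
-/

open MeasureTheory Real

/-- The Jackson weight `g_k^p`. -/
noncomputable def jacksonWeight (p k : ℕ) : ℝ :=
  (((p : ℝ) + 1 - (k : ℝ)) * Real.cos (Real.pi * k / (p + 1)) +
      Real.sin (Real.pi * k / (p + 1)) * Real.cot (Real.pi / (p + 1))) / ((p : ℝ) + 1)

/-- The Jackson kernel
`k_p^J(E, E') = (1/(π√(1 − E²))) Σ_{k=0}^{p−1} (2 g_k^p/(1 + δ_{0k})) T_k(E) T_k(E')`. -/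
noncomputable def jacksonKernel (p : ℕ) (E E' : ℝ) : ℝ :=
  (1 / (Real.pi * Real.sqrt (1 - E ^ 2))) *
    ∑ k ∈ Finset.range p,
      (2 * jacksonWeight p k / (1 + if k = 0 then (1 : ℝ) else 0)) *
        ((Polynomial.Chebyshev.T ℝ (k : ℤ)).eval E) * ((Polynomial.Chebyshev.T ℝ (k : ℤ)).eval E')

namespace JacksonKPM

theorem integral_neg_self_eq_zero_of_odd {f : ℝ → ℝ} (hf : f.Odd) (a : ℝ) :
    ∫ x in -a..a, f x = 0 := by
  have h := intervalIntegral.integral_comp_neg (a := -a) (b := a) f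
  simp only [hf.eq, intervalIntegral.integral_neg, neg_neg] at h
  linarith

theorem integral_cos_int_mul (j : ℤ) :
    ∫ x in -π..π, cos (j * x) = if j = 0 then 2 * π else 0 := by
  rcases eq_or_ne j 0 with rfl | hj
  · simp [two_mul]
  · rw [if_neg hj, intervalIntegral.integral_comp_mul_left (fun u => cos u) (mod_cast hj),
      integral_cos, mul_neg, sin_neg, sin_int_mul_pi]
    simp

theorem integral_cos_nat_mul_mul_cos (k : ℕ) :
    ∫ x in -π..π, cos (k * x) * cos x = if k = 1 then π else 0 := by
  have h : ∀ x : ℝ, cos (k * x) * cos x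
      = (cos (((k + 1 : ℤ) : ℝ) * x) + cos (((k - 1 : ℤ) : ℝ) * x)) / 2 := fun x => by
    push_cast
    rw [add_mul, sub_mul, one_mul, cos_add, cos_sub]
    ring
  simp_rw [h]
  rw [intervalIntegral.integral_div,
    intervalIntegral.integral_add (Continuous.intervalIntegrable (by fun_prop) _ _)
      (Continuous.intervalIntegrable (by fun_prop) _ _), integral_cos_int_mul, integral_cos_int_mul]
  rcases eq_or_ne k 1 with rfl | hk
  · norm_num
  · have hk' : (k : ℤ) - 1 ≠ 0 := by omega
    simp [hk, hk', show (k : ℤ) + 1 ≠ 0 by omega]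

/-- Symmetrisation over `[0, π]` against an even `f`, followed by the substitution
`x = α - θ` and periodicity. -/
theorem integral_add_comp_mul_eq_integral_mul_comp_sub {D f : ℝ → ℝ} (hD : Continuous D)
    (hf : Continuous f) (hDper : D.Periodic (2 * π)) (hfper : f.Periodic (2 * π))
    (hfev : f.Even) (α : ℝ) :
    ∫ θ in 0..π, (D (α - θ) + D (α + θ)) * f θ = ∫ x in -π..π, D x * f (α - x) := by
  have hreflect : ∫ θ in 0..π, D (α + θ) * f θ = ∫ θ in -π..0, D (α - θ) * f θ := by
    have h := intervalIntegral.integral_comp_neg (a := 0) (b := π) fun θ => D (α - θ) * f θ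
    simp only [sub_neg_eq_add, hfev.eq, neg_zero] at h
    exact h
  have hint : ∀ {g : ℝ → ℝ}, Continuous g → ∀ a b : ℝ, IntervalIntegrable g volume a b :=
    fun hg => hg.intervalIntegrable
  have hper : (fun x => D x * f (α - x)).Periodic (2 * π) := fun x => by
    simp only [hDper x, sub_add_eq_sub_sub, hfper.sub_eq]
  calc ∫ θ in 0..π, (D (α - θ) + D (α + θ)) * f θ
      = ∫ θ in -π..π, D (α - θ) * f θ := by
        simp_rw [add_mul]
        rw [intervalIntegral.integral_add (hint (by fun_prop) _ _) (hint (by fun_prop) _ _),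
          hreflect, add_comm, intervalIntegral.integral_add_adjacent_intervals
            (hint (by fun_prop) _ _) (hint (by fun_prop) _ _)]
    _ = ∫ x in α - π..α - π + 2 * π, D x * f (α - x) := by
        have h := intervalIntegral.integral_comp_sub_left (a := -π) (b := π)
          (fun x => D x * f (α - x)) α
        simp only [sub_sub_cancel, sub_neg_eq_add] at h
        rw [h, show α - π + 2 * π = α + π by ring]
    _ = ∫ x in -π..π, D x * f (α - x) := by
        rw [hper.intervalIntegral_add_eq (α - π) (-π)]
        ring_nf

theorem abs_sub_sub_deriv_mul_le {f : ℝ → ℝ} (hf : Differentiable ℝ f)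
    (hf' : Differentiable ℝ (deriv f)) {s : Set ℝ} (hs : Convex ℝ s) {M : ℝ}
    (hM : ∀ y ∈ s, |deriv (deriv f) y| ≤ M) {x y : ℝ} (hx : x ∈ s) (hy : y ∈ s) :
    |f y - f x - deriv f x * (y - x)| ≤ M * (y - x) ^ 2 := by
  have hderiv : ∀ z ∈ s, |deriv f z - deriv f x| ≤ M * |z - x| := fun z hz => by
    simpa only [Real.norm_eq_abs] using hs.norm_image_sub_le_of_norm_hasDerivWithin_le
      (fun w _ => (hf' w).hasDerivAt.hasDerivWithinAt) (by simpa only [Real.norm_eq_abs]) hx hz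
  have hM0 : 0 ≤ M := (abs_nonneg _).trans (hM x hx)
  have hseg : Set.uIcc x y ⊆ s := by
    rw [← segment_eq_uIcc]; exact hs.segment_subset hx hy
  have h := (convex_uIcc x y).norm_image_sub_le_of_norm_hasDerivWithin_le
    (f := fun z => f z - deriv f x * z) (C := M * |y - x|)
    (fun z _ => ((hf z).hasDerivAt.sub ((hasDerivAt_id z).const_mul (deriv f x))).hasDerivWithinAt)
    (fun z hz => by
      simp only [mul_one, Real.norm_eq_abs]
      exact (hderiv z (hseg hz)).trans
        (mul_le_mul_of_nonneg_left (Set.abs_sub_left_of_mem_uIcc hz) hM0))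
    Set.left_mem_uIcc Set.right_mem_uIcc
  simp only [Real.norm_eq_abs] at h
  calc |f y - f x - deriv f x * (y - x)|
      = |f y - deriv f x * y - (f x - deriv f x * x)| := by ring_nf
    _ ≤ M * |y - x| * |y - x| := h
    _ = M * (y - x) ^ 2 := by rw [mul_assoc, abs_mul_abs_self, sq]

section Autocorrelation

variable {R : Type*} [CommRing R]

def autocorr (a : ℕ → R) (q k : ℕ) : R :=
  ∑ m ∈ Finset.range (q - k), a m * a (m + k)

theorem autocorr_self (a : ℕ → R) (q : ℕ) : autocorr a q q = 0 := by
  simp [autocorr]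

theorem autocorr_succ (a : ℕ → R) {q k : ℕ} (hk : k ≤ q) :
    autocorr a (q + 1) k = autocorr a q k + a (q - k) * a q := by
  rw [autocorr, autocorr, show q + 1 - k = q - k + 1 by omega, Finset.sum_range_succ,
    Nat.sub_add_cancel hk]

theorem sum_sum_mul_mul_sub_eq_sum_autocorr (a : ℕ → R) (G : ℤ → R)
    (hG : G.Even) (q : ℕ) :
    ∑ m ∈ Finset.range q, ∑ n ∈ Finset.range q, a m * a n * G (m - n)
      = ∑ k ∈ Finset.range q, (if k = 0 then 1 else 2) * autocorr a q k * G k := by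
  induction q with
  | zero => simp
  | succ q ih =>
    have hrow : ∑ m ∈ Finset.range q, a m * a q * G (m - q)
        = ∑ n ∈ Finset.range q, a q * a n * G (q - n) :=
      Finset.sum_congr rfl fun m _ => by rw [← hG.eq, neg_sub, mul_comm (a m)]
    have hlast : ∑ k ∈ Finset.range (q + 1), (if k = 0 then 1 else 2) * (a (q - k) * a q) * G k
        = 2 * ∑ n ∈ Finset.range q, a q * a n * G (q - n) + a q * a q * G 0 := by
      rw [Finset.sum_range_succ', ← Finset.sum_range_reflect, Finset.mul_sum]
      refine congrArg₂ (· + ·) (Finset.sum_congr rfl fun n hn => ?_) (by simp)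
      have hn : n < q := Finset.mem_range.mp hn
      rw [if_neg (Nat.succ_ne_zero _), show q - (q - 1 - n + 1) = n by omega,
        show ((q - 1 - n + 1 : ℕ) : ℤ) = q - n by omega]
      ring
    calc ∑ m ∈ Finset.range (q + 1), ∑ n ∈ Finset.range (q + 1), a m * a n * G (m - n)
        = ∑ m ∈ Finset.range q, ∑ n ∈ Finset.range q, a m * a n * G (m - n)
          + 2 * ∑ n ∈ Finset.range q, a q * a n * G (q - n) + a q * a q * G 0 := by
          simp only [Finset.sum_range_succ, sub_self, Finset.sum_add_distrib, hrow]
          ring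
      _ = ∑ k ∈ Finset.range (q + 1), (if k = 0 then 1 else 2) * autocorr a (q + 1) k * G k := by
          have hpad : ∑ k ∈ Finset.range q, (if k = 0 then 1 else 2) * autocorr a q k * G k
              = ∑ k ∈ Finset.range (q + 1), (if k = 0 then 1 else 2) * autocorr a q k * G k := by
            simp [Finset.sum_range_succ, autocorr_self]
          rw [ih, add_assoc, ← hlast, hpad, ← Finset.sum_add_distrib]
          refine Finset.sum_congr rfl fun k hk => ?_
          rw [autocorr_succ a (Nat.lt_succ_iff.mp (Finset.mem_range.mp hk))]
          ring

end Autocorrelation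

theorem sq_sum_cos_add_sq_sum_sin (a : ℕ → ℝ) (q : ℕ) (x : ℝ) :
    (∑ m ∈ Finset.range q, a m * cos (m * x)) ^ 2 + (∑ m ∈ Finset.range q, a m * sin (m * x)) ^ 2
      = ∑ k ∈ Finset.range q, (if k = 0 then 1 else 2) * autocorr a q k * cos (k * x) := by
  have h := sum_sum_mul_mul_sub_eq_sum_autocorr a (fun j : ℤ => cos (j * x))
    (fun j => by simp only [Int.cast_neg, neg_mul, cos_neg]) q
  simp only [Int.cast_natCast] at h
  rw [← h, sq, sq, Finset.sum_mul_sum, Finset.sum_mul_sum, ← Finset.sum_add_distrib]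
  refine Finset.sum_congr rfl fun m _ => ?_
  rw [← Finset.sum_add_distrib]
  refine Finset.sum_congr rfl fun n _ => ?_
  push_cast
  rw [sub_mul, cos_sub]
  ring

theorem two_mul_sin_mul_sum_range_cos (x t : ℝ) (n : ℕ) :
    2 * sin t * ∑ m ∈ Finset.range n, cos (x + 2 * m * t)
      = sin (x + (2 * n - 1) * t) - sin (x - t) := by
  have hstep : ∀ m : ℕ, 2 * sin t * cos (x + 2 * m * t)
      = sin (x + (2 * (m + 1 : ℕ) - 1) * t) - sin (x + (2 * m - 1) * t) := fun m => by
    push_cast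
    rw [show x + (2 * (m + 1) - 1) * t = x + 2 * m * t + t by ring,
      show x + (2 * m - 1) * t = x + 2 * m * t - t by ring, sin_add, sin_sub]
    ring
  rw [Finset.mul_sum, Finset.sum_congr rfl fun m _ => hstep m,
    Finset.sum_range_sub (fun m : ℕ => sin (x + (2 * m - 1) * t))]
  norm_num [sub_eq_add_neg]

/-- `a_m = sin ((m + 1) π / (p + 1))`: the Jackson weights are the autocorrelations of this
sequence, which makes the Jackson kernel a Fejér–Riesz square. -/
noncomputable def jacksonAmplitude (p m : ℕ) : ℝ :=
  sin ((m + 1) * (π / (p + 1)))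

theorem two_mul_autocorr_jacksonAmplitude {p k : ℕ} (hk : k < p) :
    2 * autocorr (jacksonAmplitude p) p k = (p + 1) * jacksonWeight p k := by
  set t : ℝ := π / (p + 1) with ht
  have hp : (1 : ℝ) ≤ p := mod_cast (show 1 ≤ p by omega)
  have hpt : ((p : ℝ) + 1) * t = π := by rw [ht]; field_simp
  have hsin : sin t ≠ 0 := (sin_pos_of_pos_of_lt_pi (by positivity)
    (div_lt_self pi_pos (by linarith))).ne'
  have hprod : ∀ m : ℕ, 2 * (jacksonAmplitude p m * jacksonAmplitude p (m + k))
      = cos (k * t) - cos ((k + 2) * t + 2 * m * t) := fun m => by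
    simp only [jacksonAmplitude, ← ht]
    push_cast
    rw [show (k : ℝ) * t = (m + k + 1) * t - (m + 1) * t by ring,
      show (k + 2) * t + 2 * m * t = (m + k + 1) * t + (m + 1) * t by ring, cos_sub, cos_add]
    ring
  have hcos : sin t * ∑ m ∈ Finset.range (p - k), cos ((k + 2) * t + 2 * m * t)
      = -sin ((k + 1) * t) := by
    have h := two_mul_sin_mul_sum_range_cos ((k + 2) * t) t (p - k)
    rw [Nat.cast_sub hk.le, show (k + 2) * t + (2 * (p - k) - 1) * t
      = 2 * π - (k + 1) * t by rw [← hpt]; ring, sin_two_pi_sub,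
      show (k + 2) * t - t = (k + 1) * t by ring] at h
    linarith
  have hsum : 2 * autocorr (jacksonAmplitude p) p k
      = (p - k) * cos (k * t) + sin ((k + 1) * t) / sin t := by
    rw [autocorr, Finset.mul_sum, Finset.sum_congr rfl fun m _ => hprod m, Finset.sum_sub_distrib,
      Finset.sum_const, Finset.card_range, nsmul_eq_mul, Nat.cast_sub hk.le,
      ← neg_neg (sin _), ← hcos]
    field_simp
    ring
  rw [hsum, jacksonWeight, show π * k / (p + 1) = k * t by rw [ht]; ring, ← ht, cot_eq_cos_div_sin,
    add_mul, sin_add, one_mul]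
  field_simp
  ring

theorem jacksonWeight_zero (p : ℕ) : jacksonWeight p 0 = 1 := by
  rw [jacksonWeight]
  field_simp
  simp

theorem jacksonWeight_one {p : ℕ} (hp : 1 ≤ p) : jacksonWeight p 1 = cos (π / (p + 1)) := by
  have hsin : sin (π / (p + 1)) ≠ 0 := (sin_pos_of_pos_of_lt_pi (by positivity)
    (div_lt_self pi_pos (by norm_cast; omega))).ne'
  rw [jacksonWeight, Nat.cast_one, mul_one, cot_eq_cos_div_sin]
  field_simp
  ring

/-- The Jackson kernel in the angle variable `E = cos x`: `g₀ + 2 ∑_{1 ≤ k < p} g_k cos (k x)`. -/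
noncomputable def jacksonTrigKernel (p : ℕ) (x : ℝ) : ℝ :=
  ∑ k ∈ Finset.range p, 2 * jacksonWeight p k / (1 + if k = 0 then (1 : ℝ) else 0) * cos (k * x)

theorem jacksonTrigKernel_eq_sq (p : ℕ) (x : ℝ) :
    (p + 1) / 2 * jacksonTrigKernel p x
      = (∑ m ∈ Finset.range p, jacksonAmplitude p m * cos (m * x)) ^ 2
        + (∑ m ∈ Finset.range p, jacksonAmplitude p m * sin (m * x)) ^ 2 := by
  rw [sq_sum_cos_add_sq_sum_sin, jacksonTrigKernel, Finset.mul_sum]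
  refine Finset.sum_congr rfl fun k hk => ?_
  have h := two_mul_autocorr_jacksonAmplitude (Finset.mem_range.mp hk)
  split_ifs
  · linear_combination cos (k * x) / 2 * h.symm
  · linear_combination cos (k * x) * h.symm

theorem jacksonTrigKernel_nonneg (p : ℕ) (x : ℝ) : 0 ≤ jacksonTrigKernel p x := by
  have h : 0 ≤ (p + 1) / 2 * jacksonTrigKernel p x := jacksonTrigKernel_eq_sq p x ▸ by positivity
  exact (mul_nonneg_iff_of_pos_left (by positivity)).mp h

theorem continuous_jacksonTrigKernel (p : ℕ) : Continuous (jacksonTrigKernel p) := by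
  unfold jacksonTrigKernel
  fun_prop

theorem jacksonTrigKernel_even (p : ℕ) : (jacksonTrigKernel p).Even := fun x => by
  simp only [jacksonTrigKernel, mul_neg, cos_neg]

theorem jacksonTrigKernel_periodic (p : ℕ) : (jacksonTrigKernel p).Periodic (2 * π) := fun x => by
  refine Finset.sum_congr rfl fun k _ => ?_
  rw [show (k : ℝ) * (x + 2 * π) = k * x + (k : ℤ) * (2 * π) by push_cast; ring,
    cos_add_int_mul_two_pi]

theorem integral_jacksonTrigKernel_mul {p : ℕ} {h : ℝ → ℝ} (hh : Continuous h) :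
    ∫ x in -π..π, jacksonTrigKernel p x * h x
      = ∑ k ∈ Finset.range p, 2 * jacksonWeight p k / (1 + if k = 0 then (1 : ℝ) else 0) *
          ∫ x in -π..π, cos (k * x) * h x := by
  simp only [jacksonTrigKernel, Finset.sum_mul, mul_assoc]
  rw [intervalIntegral.integral_finsetSum fun k _ =>
    (by fun_prop : Continuous _).intervalIntegrable _ _]
  simp only [intervalIntegral.integral_const_mul]

theorem integral_jacksonTrigKernel {p : ℕ} (hp : 1 ≤ p) :
    ∫ x in -π..π, jacksonTrigKernel p x = 2 * π := by
  have h := integral_jacksonTrigKernel_mul (p := p) continuous_const (h := fun _ => 1)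
  simp only [mul_one] at h
  rw [h, Finset.sum_eq_single_of_mem 0 (Finset.mem_range.mpr hp) fun k _ hk => ?_]
  · simp only [jacksonWeight_zero, Nat.cast_zero, zero_mul, cos_zero, if_pos,
      intervalIntegral.integral_const, sub_neg_eq_add, smul_eq_mul]
    ring
  · have := integral_cos_int_mul k
    push_cast at this
    simp [this, hk]

theorem integral_jacksonTrigKernel_mul_cos {p : ℕ} (hp : 2 ≤ p) :
    ∫ x in -π..π, jacksonTrigKernel p x * cos x = 2 * π * cos (π / (p + 1)) := by
  rw [integral_jacksonTrigKernel_mul continuous_cos,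
    Finset.sum_eq_single_of_mem 1 (Finset.mem_range.mpr hp) fun k _ hk => by
      simp [integral_cos_nat_mul_mul_cos, hk]]
  rw [integral_cos_nat_mul_mul_cos, if_pos rfl, jacksonWeight_one (by omega)]
  norm_num
  ring

theorem sq_le_mul_one_sub_cos {x : ℝ} (hx : |x| ≤ π) : x ^ 2 ≤ π ^ 2 / 2 * (1 - cos x) := by
  have h := cos_le_one_sub_mul_cos_sq hx
  have hπ : 0 < π ^ 2 := by positivity
  calc x ^ 2 = π ^ 2 / 2 * (2 / π ^ 2 * x ^ 2) := by field_simp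
    _ ≤ π ^ 2 / 2 * (1 - cos x) := by gcongr; linarith

theorem abs_integral_mul_comp_sub_sub_le {D f : ℝ → ℝ} (hD : Continuous D)
    (hD0 : ∀ x ∈ Set.Icc (-π) π, 0 ≤ D x) (hDev : D.Even) (hD1 : ∫ x in -π..π, D x = 2 * π)
    {c : ℝ} (hDc : ∫ x in -π..π, D x * cos x = 2 * π * c) (hf : Differentiable ℝ f)
    (hf' : Differentiable ℝ (deriv f)) {α M : ℝ}
    (hM : ∀ y ∈ Set.Icc (α - π) (α + π), |deriv (deriv f) y| ≤ M) :
    |(2 * π)⁻¹ * (∫ x in -π..π, D x * f (α - x)) - f α| ≤ M * π ^ 2 / 2 * (1 - c) := by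
  have hα : α ∈ Set.Icc (α - π) (α + π) := ⟨by linarith [pi_pos], by linarith [pi_pos]⟩
  have hM0 : 0 ≤ M := (abs_nonneg _).trans (hM α hα)
  have htaylor : ∀ x ∈ Set.Icc (-π) π,
      |f (α - x) - f α + deriv f α * x| ≤ M * π ^ 2 / 2 * (1 - cos x) := fun x hx => by
    have h := abs_sub_sub_deriv_mul_le hf hf' (convex_Icc _ _) hM hα (y := α - x)
      ⟨by linarith [hx.2], by linarith [hx.1]⟩
    rw [show α - x - α = -x by ring, neg_sq, mul_neg, sub_neg_eq_add] at h
    calc _ ≤ M * x ^ 2 := h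
      _ ≤ M * (π ^ 2 / 2 * (1 - cos x)) := by gcongr; exact sq_le_mul_one_sub_cos (abs_le.mpr hx)
      _ = _ := by ring
  have hfirst : ∫ x in -π..π, D x * x = 0 :=
    integral_neg_self_eq_zero_of_odd (fun x => by simp only [hDev.eq, mul_neg]) π
  have hint : ∀ g : ℝ → ℝ, Continuous g → IntervalIntegrable (fun x => D x * g x) volume (-π) π :=
    fun g hg => (hD.mul hg).intervalIntegrable _ _
  have hfc := hf.continuous
  have herror : ∫ x in -π..π, D x * (f (α - x) - f α + deriv f α * x)
      = (∫ x in -π..π, D x * f (α - x)) - 2 * π * f α := by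
    simp only [mul_add, mul_sub]
    rw [intervalIntegral.integral_add ((hint _ (by fun_prop)).sub (hint _ continuous_const))
      (hint (fun x => deriv f α * x) (by fun_prop)),
      intervalIntegral.integral_sub (hint _ (by fun_prop)) (hint _ continuous_const)]
    simp only [mul_left_comm _ (deriv f α), intervalIntegral.integral_const_mul,
      intervalIntegral.integral_mul_const, hD1, hfirst]
    ring
  have hbound : |∫ x in -π..π, D x * (f (α - x) - f α + deriv f α * x)|
      ≤ 2 * π * (M * π ^ 2 / 2 * (1 - c)) := by
    calc _ ≤ ∫ x in -π..π, |D x * (f (α - x) - f α + deriv f α * x)| :=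
          intervalIntegral.abs_integral_le_integral_abs (by linarith [pi_pos])
      _ ≤ ∫ x in -π..π, M * π ^ 2 / 2 * (D x - D x * cos x) := by
          refine intervalIntegral.integral_mono_on (by linarith [pi_pos])
            ((hint _ (by fun_prop)).abs) (Continuous.intervalIntegrable (by fun_prop) _ _)
            fun x hx => ?_
          rw [abs_mul, abs_of_nonneg (hD0 x hx), ← mul_one_sub, mul_left_comm]
          exact mul_le_mul_of_nonneg_left (htaylor x hx) (hD0 x hx)
      _ = 2 * π * (M * π ^ 2 / 2 * (1 - c)) := by
          rw [intervalIntegral.integral_const_mul, intervalIntegral.integral_sub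
            (hD.intervalIntegrable _ _) (hint _ continuous_cos), hD1, hDc]
          ring
  rw [herror] at hbound
  have h2π : 0 < 2 * π := by positivity
  rw [show (2 * π)⁻¹ * (∫ x in -π..π, D x * f (α - x)) - f α
      = (2 * π)⁻¹ * ((∫ x in -π..π, D x * f (α - x)) - 2 * π * f α) by field_simp,
    abs_mul, abs_of_pos (inv_pos.mpr h2π), inv_mul_le_iff₀ h2π]
  exact hbound

theorem abs_integral_jacksonTrigKernel_mul_comp_sub_sub_le {p : ℕ} (hp : 2 ≤ p) {f : ℝ → ℝ}
    (hf : Differentiable ℝ f) (hf' : Differentiable ℝ (deriv f)) {α M : ℝ}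
    (hM : ∀ y ∈ Set.Icc (α - π) (α + π), |deriv (deriv f) y| ≤ M) :
    |(2 * π)⁻¹ * (∫ x in -π..π, jacksonTrigKernel p x * f (α - x)) - f α|
      ≤ π ^ 4 * M / 4 / p ^ 2 := by
  have hM0 : 0 ≤ M := (abs_nonneg _).trans (hM α ⟨by linarith [pi_pos], by linarith [pi_pos]⟩)
  have hp0 : (0 : ℝ) < p := by norm_cast; omega
  have h := abs_integral_mul_comp_sub_sub_le (continuous_jacksonTrigKernel p)
    (fun x _ => jacksonTrigKernel_nonneg p x) (jacksonTrigKernel_even p)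
    (integral_jacksonTrigKernel (by omega)) (integral_jacksonTrigKernel_mul_cos hp) hf hf' hM
  have hcos : 1 - cos (π / (p + 1)) ≤ (π / p) ^ 2 / 2 := by
    have h1 := one_sub_sq_div_two_le_cos (x := π / (p + 1))
    have h2 : π / (p + 1) ≤ π / p := div_le_div_of_nonneg_left pi_pos.le hp0 (by linarith)
    have h3 : (π / (p + 1)) ^ 2 ≤ (π / p) ^ 2 := pow_le_pow_left₀ (by positivity) h2 2
    linarith
  calc _ ≤ M * π ^ 2 / 2 * (1 - cos (π / (p + 1))) := h
    _ ≤ M * π ^ 2 / 2 * ((π / p) ^ 2 / 2) := by gcongr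
    _ = π ^ 4 * M / 4 / p ^ 2 := by field_simp; ring

theorem integral_neg_one_one_eq_integral_comp_cos_mul_sin (g : ℝ → ℝ) :
    ∫ E in (-1 : ℝ)..1, g E = ∫ θ in 0..π, g (cos θ) * sin θ := by
  have himage : cos '' Set.Icc 0 π = Set.Icc (-1) 1 :=
    (Set.MapsTo.image_subset fun x _ => cos_mem_Icc x).antisymm surjOn_cos
  rw [intervalIntegral.integral_of_le (by norm_num), ← integral_Icc_eq_integral_Ioc, ← himage,
    integral_image_eq_integral_abs_deriv_smul measurableSet_Icc
      (fun x _ => (hasDerivAt_cos x).hasDerivWithinAt) injOn_cos,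
    intervalIntegral.integral_of_le pi_pos.le, ← integral_Icc_eq_integral_Ioc]
  refine setIntegral_congr_fun measurableSet_Icc fun θ hθ => ?_
  rw [abs_neg, abs_of_nonneg (sin_nonneg_of_nonneg_of_le_pi hθ.1 hθ.2), smul_eq_mul, mul_comm]

theorem jacksonKernel_cos_cos (p : ℕ) (α θ : ℝ) :
    jacksonKernel p (cos α) (cos θ)
      = (jacksonTrigKernel p (α - θ) + jacksonTrigKernel p (α + θ)) / (2 * π * |sin α|) := by
  rw [jacksonKernel, ← sin_sq, sqrt_sq_eq_abs, jacksonTrigKernel, jacksonTrigKernel,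
    ← Finset.sum_add_distrib, Finset.mul_sum, Finset.sum_div]
  refine Finset.sum_congr rfl fun k _ => ?_
  simp only [Polynomial.Chebyshev.T_real_cos, Int.cast_natCast, mul_sub, mul_add, cos_sub, cos_add]
  ring

/-- The density `ρ̃(E) = π √(1 - E²) ρ(E)` with respect to the Chebyshev measure. -/
noncomputable def chebyshevDensity (ρ : ℝ → ℝ) (E : ℝ) : ℝ :=
  π * √(1 - E ^ 2) * ρ E

theorem integral_jacksonKernel_mul_sub_eq {ρ : ℝ → ℝ}
    (hρ : ContinuousOn (chebyshevDensity ρ) (Set.Icc (-1) 1)) (p : ℕ) {α : ℝ} (hα : sin α ≠ 0) :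
    (∫ E' in (-1 : ℝ)..1, jacksonKernel p (cos α) E' * ρ E') - ρ (cos α)
      = ((2 * π)⁻¹ * (∫ x in -π..π, jacksonTrigKernel p x * chebyshevDensity ρ (cos (α - x)))
          - chebyshevDensity ρ (cos α)) / (π * |sin α|) := by
  set f := fun θ => chebyshevDensity ρ (cos θ) with hf
  have hfc : Continuous f := hρ.comp_continuous continuous_cos cos_mem_Icc
  have hfper : f.Periodic (2 * π) := fun θ => by simp only [hf, cos_add_two_pi]
  have hfev : f.Even := fun θ => by simp only [hf, cos_neg]
  have hsubst : ∀ θ ∈ Set.uIcc 0 π, jacksonKernel p (cos α) (cos θ) * ρ (cos θ) * sin θ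
      = (jacksonTrigKernel p (α - θ) + jacksonTrigKernel p (α + θ)) * f θ
        / (2 * π ^ 2 * |sin α|) := fun θ hθ => by
    rw [Set.uIcc_of_le pi_pos.le] at hθ
    simp only [hf, chebyshevDensity]
    rw [jacksonKernel_cos_cos, ← sin_sq, sqrt_sq (sin_nonneg_of_nonneg_of_le_pi hθ.1 hθ.2)]
    field_simp
  have hfα : chebyshevDensity ρ (cos α) = π * |sin α| * ρ (cos α) := by
    rw [chebyshevDensity, ← sin_sq, sqrt_sq_eq_abs]
  rw [integral_neg_one_one_eq_integral_comp_cos_mul_sin, intervalIntegral.integral_congr hsubst,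
    intervalIntegral.integral_div, integral_add_comp_mul_eq_integral_mul_comp_sub
      (continuous_jacksonTrigKernel p) hfc (jacksonTrigKernel_periodic p) hfper hfev, hf, hfα]
  have hα' : |sin α| ≠ 0 := abs_ne_zero.mpr hα
  field_simp

end JacksonKPM

open JacksonKPM in
/-- **`O(p⁻²)` convergence of Jackson-regularized KPM at smooth points.**
If `ρ̃(E') = π√(1 − E'²) ρ(E')` is twice continuously differentiable on `[−1, 1]` and
`E ∈ (−1, 1)`, then `|∫_{−1}^1 k_p^J(E, E') ρ(E') dE' − ρ(E)| ≤ C p⁻²` for all `p ≥ 3`. -/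
theorem jackson_kpm_second_order_convergence
    (ρ : ℝ → ℝ)
    (hρ : ContDiffOn ℝ 2 (fun E' : ℝ => Real.pi * Real.sqrt (1 - E' ^ 2) * ρ E')
      (Set.Icc (-1 : ℝ) 1))
    (E : ℝ) (hE : E ∈ Set.Ioo (-1 : ℝ) 1) :
    ∃ C > 0, ∀ p : ℕ, 3 ≤ p →
      |(∫ E' in (-1 : ℝ)..1, jacksonKernel p E E' * ρ E') - ρ E| ≤ C / (p : ℝ) ^ 2 := by
  set α := arccos E
  have hcos : cos α = E := cos_arccos hE.1.le hE.2.le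
  have hsin : 0 < sin α := sin_pos_of_pos_of_lt_pi (arccos_pos.mpr hE.2) (arccos_lt_pi.mpr hE.1)
  set f := fun θ => chebyshevDensity ρ (cos θ)
  have hf : ContDiff ℝ 2 f := hρ.comp_contDiff contDiff_cos cos_mem_Icc
  obtain ⟨hf1, -, hf'⟩ := contDiff_succ_iff_deriv.mp (show ContDiff ℝ (1 + 1) f from hf)
  obtain ⟨M, hM⟩ := isCompact_Icc.exists_bound_of_continuousOn
    (hf'.continuous_deriv le_rfl).continuousOn (s := Set.Icc (α - π) (α + π))
  refine ⟨π ^ 3 * (|M| + 1) / (4 * sin α), by positivity, fun p hp => ?_⟩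
  rw [← hcos, integral_jacksonKernel_mul_sub_eq hρ.continuousOn p hsin.ne', abs_div,
    abs_of_pos (mul_pos pi_pos (abs_pos.mpr hsin.ne')), abs_of_pos hsin]
  calc _ ≤ π ^ 4 * M / 4 / p ^ 2 / (π * sin α) := by
        gcongr
        exact abs_integral_jacksonTrigKernel_mul_comp_sub_sub_le (by omega : 2 ≤ p) hf1
          (hf'.differentiable one_ne_zero) hM
    _ = π ^ 3 * M / (4 * sin α) / p ^ 2 := by field_simp
    _ ≤ π ^ 3 * (|M| + 1) / (4 * sin α) / p ^ 2 := by
        gcongr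
        linarith [le_abs_self M]
end

section
/- For every integer p ≥ 2 and every E ∈ (−1, 1), ∫_{−1}^{1} k_p^J(E, E') · (E' − E) · (1/(π√(1 − E'²))) dE' = (g_1^p − g_0^p) · E/(π√(1 − E²)), where k_p^J is the Jackson kernel of order p and g_0^p, g_1^p are Jackson weights. -/
open MeasureTheory Real

/-!
Against the Chebyshev measure `dE'/√(1 - E'²)`, the polynomials `T_k` are orthogonal with
`‖T_0‖² = π` and `‖T_k‖² = π/2` for `k ≥ 1`, so the coefficients `2/(1 + δ_{0k})` of the kernel make
`∫ Σ_k (2 g_k/(1 + δ_{0k})) T_k(E) T_k(E') T_m(E') dE'/√(1 - E'²) = π g_m T_m(E)` for `m < p`.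
Writing `E' - E = T_1(E') - E T_0(E')` then leaves `π (g_1 - g_0) E` times the constant
`1/(π · π√(1 - E²))`.
-/

namespace Polynomial.Chebyshev

theorem integral_eval_T_real_mul_eval_T_real_measureT_nat (k m : ℕ) :
    ∫ x, (T ℝ k).eval x * (T ℝ m).eval x ∂measureT =
      if k = m then π * (1 + if m = 0 then 1 else 0) / 2 else 0 := by
  by_cases hkm : k = m
  · subst hkm
    by_cases hk : k = 0
    · subst hk
      rw [Nat.cast_zero, integral_eval_T_real_mul_self_measureT_zero]
      norm_num
    · simp [hk, integral_T_real_mul_self_measureT_of_ne_zero hk]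
  · simp [hkm, integral_eval_T_real_mul_eval_T_real_measureT_of_ne hkm]

noncomputable def dampedKernel (g : ℕ → ℝ) (p : ℕ) (E x : ℝ) : ℝ :=
  ∑ k ∈ Finset.range p,
    (2 * g k / (1 + if k = 0 then (1 : ℝ) else 0)) * ((T ℝ (k : ℤ)).eval E) *
      ((T ℝ (k : ℤ)).eval x)

@[fun_prop]
theorem continuous_dampedKernel (g : ℕ → ℝ) (p : ℕ) (E : ℝ) :
    Continuous (dampedKernel g p E) := by
  unfold dampedKernel; fun_prop

theorem integral_dampedKernel_mul_eval_T_measureT (g : ℕ → ℝ) {p m : ℕ} (hm : m < p) (E : ℝ) :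
    ∫ x, dampedKernel g p E x * (T ℝ m).eval x ∂measureT = π * g m * (T ℝ m).eval E := by
  simp only [dampedKernel, Finset.sum_mul]
  rw [integral_finsetSum _ fun k _ => integrable_measureT (by fun_prop)]
  simp only [mul_assoc, integral_const_mul, integral_eval_T_real_mul_eval_T_real_measureT_nat]
  rw [Finset.sum_eq_single_of_mem m (Finset.mem_range.mpr hm) fun k _ hk => by simp [hk],
    if_pos rfl]
  have : (1 + if m = 0 then (1 : ℝ) else 0) ≠ 0 := by split_ifs <;> norm_num
  field_simp

theorem integral_dampedKernel_mul_sub_measureT (g : ℕ → ℝ) {p : ℕ} (hp : 2 ≤ p) (E : ℝ) :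
    ∫ x, dampedKernel g p E x * (x - E) ∂measureT = π * (g 1 - g 0) * E := by
  have hsplit : ∀ x, dampedKernel g p E x * (x - E) = dampedKernel g p E x * (T ℝ (1 : ℕ)).eval x -
      E * (dampedKernel g p E x * (T ℝ (0 : ℕ)).eval x) := by
    intro x; simp only [Nat.cast_one, Nat.cast_zero, T_one, T_zero, eval_X, eval_one]; ring
  simp_rw [hsplit]
  rw [integral_sub (integrable_measureT (by fun_prop))
      ((integrable_measureT (by fun_prop)).const_mul E),
    integral_const_mul, integral_dampedKernel_mul_eval_T_measureT g (by omega),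
    integral_dampedKernel_mul_eval_T_measureT g (by omega)]
  simp only [Nat.cast_one, Nat.cast_zero, T_one, T_zero, eval_X, eval_one]
  ring

end Polynomial.Chebyshev

open Polynomial.Chebyshev

theorem jacksonKernel_eq_dampedKernel (p : ℕ) (E x : ℝ) :
    jacksonKernel p E x = (1 / (π * √(1 - E ^ 2))) * dampedKernel (jacksonWeight p) p E x :=
  rfl

theorem jackson_kernel_first_moment_general
    (p : ℕ) (hp : 2 ≤ p) (E : ℝ) :
    ∫ E' in (-1 : ℝ)..1,
        jacksonKernel p E E' * (E' - E) * (1 / (Real.pi * Real.sqrt (1 - E' ^ 2)))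
      = (jacksonWeight p 1 - jacksonWeight p 0) * E / (Real.pi * Real.sqrt (1 - E ^ 2)) := by
  calc _ = ∫ x, (π * (π * √(1 - E ^ 2)))⁻¹ *
          (dampedKernel (jacksonWeight p) p E x * (x - E)) ∂measureT := by
        rw [integral_measureT]
        refine intervalIntegral.integral_congr fun x _ => ?_
        simp only [jacksonKernel_eq_dampedKernel, sqrt_inv]
        ring
    _ = (π * (π * √(1 - E ^ 2)))⁻¹ * (π * (jacksonWeight p 1 - jacksonWeight p 0) * E) := by
        rw [integral_const_mul, integral_dampedKernel_mul_sub_measureT _ hp]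
    _ = _ := by
        field_simp [pi_ne_zero]

/-- **First moment of the Jackson kernel.**
For every `p ≥ 2` and `E ∈ (−1, 1)`,
`∫_{−1}^1 k_p^J(E, E') (E' − E)/(π√(1 − E'²)) dE' = (g_1^p − g_0^p) E/(π√(1 − E²))`. -/
theorem jackson_kernel_first_moment
    (p : ℕ) (hp : 2 ≤ p) (E : ℝ) (hE : E ∈ Set.Ioo (-1 : ℝ) 1) :
    ∫ E' in (-1 : ℝ)..1,
        jacksonKernel p E E' * (E' - E) * (1 / (Real.pi * Real.sqrt (1 - E' ^ 2)))
      = (jacksonWeight p 1 - jacksonWeight p 0) * E / (Real.pi * Real.sqrt (1 - E ^ 2)) :=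
  jackson_kernel_first_moment_general p hp E
end

section
/- For the Jackson weights g_k^p the following quantitative bounds hold: (a) for every integer p ≥ 2, 0 ≤ g_0^p − g_1^p ≤ π²/(2(p+1)²); (b) for every integer p ≥ 3, 0 ≤ 1 − g_2^p ≤ 2π²/(p+1)². In particular, g_0^p − g_1^p = O(p^{−2}) and 1 − g_2^p = O(p^{−2}) as p → ∞. -/
/-!
Put `θ = π/(p+1)`. Writing `cot θ = cos θ / sin θ` and using the double-angle formulas, the weights
collapse to `g_0 = 1`, `g_1 = cos θ` and `1 - g_2 = p/(p+1) · (1 - cos 2θ)`. Both bounds then come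
from `0 ≤ 1 - cos x ≤ x²/2`, and the `O(p⁻²)` statements from `(p+1)⁻² ≤ p⁻²`.
-/

open Real Filter Asymptotics

lemma Real.sin_pi_div_pos {x : ℝ} (hx : 1 < x) : 0 < sin (π / x) :=
  sin_pos_of_pos_of_lt_pi (div_pos pi_pos (by linarith)) (div_lt_self pi_pos hx)

lemma Real.one_sub_cos_le_sq_div_two (x : ℝ) : 1 - cos x ≤ x ^ 2 / 2 := by
  linarith [one_sub_sq_div_two_le_cos (x := x)]

lemma jacksonWeight_zero (p : ℕ) : jacksonWeight p 0 = 1 := by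
  have hp : (p : ℝ) + 1 ≠ 0 := by positivity
  simp [jacksonWeight, hp]

lemma jacksonWeight_one {p : ℕ} (hp : 1 ≤ p) : jacksonWeight p 1 = cos (π / (p + 1)) := by
  have hsin := (sin_pi_div_pos (x := (p : ℝ) + 1) (by norm_cast; omega)).ne'
  have hp : (p : ℝ) + 1 ≠ 0 := by positivity
  simp only [jacksonWeight, Nat.cast_one, mul_one, cot_eq_cos_div_sin]
  field_simp
  ring

lemma one_sub_jacksonWeight_two {p : ℕ} (hp : 1 ≤ p) :
    1 - jacksonWeight p 2 = p / (p + 1) * (1 - cos (2 * (π / (p + 1)))) := by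
  have hsin := (sin_pi_div_pos (x := (p : ℝ) + 1) (by norm_cast; omega)).ne'
  have hp : (p : ℝ) + 1 ≠ 0 := by positivity
  have harg : π * 2 / ((p : ℝ) + 1) = 2 * (π / (p + 1)) := by ring
  simp only [jacksonWeight, Nat.cast_ofNat, harg, sin_two_mul, cos_two_mul, cot_eq_cos_div_sin]
  field_simp
  ring

lemma jacksonWeight_zero_sub_one_mem_Icc {p : ℕ} (hp : 1 ≤ p) :
    jacksonWeight p 0 - jacksonWeight p 1 ∈ Set.Icc 0 (π ^ 2 / (2 * ((p : ℝ) + 1) ^ 2)) := by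
  rw [jacksonWeight_zero, jacksonWeight_one hp]
  refine ⟨sub_nonneg.mpr (cos_le_one _), ?_⟩
  calc 1 - cos (π / (p + 1)) ≤ (π / (p + 1)) ^ 2 / 2 := one_sub_cos_le_sq_div_two _
    _ = π ^ 2 / (2 * ((p : ℝ) + 1) ^ 2) := by rw [div_pow, div_div, mul_comm]

lemma one_sub_jacksonWeight_two_mem_Icc {p : ℕ} (hp : 1 ≤ p) :
    1 - jacksonWeight p 2 ∈ Set.Icc 0 (2 * π ^ 2 / ((p : ℝ) + 1) ^ 2) := by
  rw [one_sub_jacksonWeight_two hp]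
  set θ := π / ((p : ℝ) + 1) with hθ
  have hcos : 0 ≤ 1 - cos (2 * θ) := sub_nonneg.mpr (cos_le_one _)
  have hfrac : (p : ℝ) / (p + 1) ≤ 1 := (div_le_one (by positivity)).mpr (by linarith)
  refine ⟨by positivity, ?_⟩
  calc (p : ℝ) / (p + 1) * (1 - cos (2 * θ)) ≤ 1 * (1 - cos (2 * θ)) := by gcongr
    _ ≤ (2 * θ) ^ 2 / 2 := by rw [one_mul]; exact one_sub_cos_le_sq_div_two _
    _ = 2 * π ^ 2 / ((p : ℝ) + 1) ^ 2 := by rw [hθ, mul_pow, div_pow]; ring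

lemma isBigO_inv_sq_of_norm_le_div_succ_sq {f : ℕ → ℝ} {C : ℝ}
    (hf : ∀ᶠ p in atTop, ‖f p‖ ≤ C / ((p : ℝ) + 1) ^ 2) :
    f =O[atTop] fun p : ℕ => ((p : ℝ) ^ 2)⁻¹ := by
  have hsucc : (fun p : ℕ => (((p : ℝ) + 1) ^ 2)⁻¹) =O[atTop] fun p : ℕ => ((p : ℝ) ^ 2)⁻¹ := by
    refine IsBigO.of_bound 1 ?_
    filter_upwards [eventually_gt_atTop 0] with p hp
    have hp : (0 : ℝ) < p := by exact_mod_cast hp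
    rw [one_mul, norm_inv, norm_inv, norm_of_nonneg (by positivity), norm_of_nonneg (by positivity)]
    gcongr
    linarith
  refine (IsBigO.of_bound C ?_).trans hsucc
  filter_upwards [hf] with p hp
  rwa [norm_inv, norm_of_nonneg (by positivity : (0 : ℝ) ≤ ((p : ℝ) + 1) ^ 2), ← div_eq_mul_inv]

/-- **Quantitative bounds on the Jackson weights:**
(a) `0 ≤ g_0^p − g_1^p ≤ π²/(2(p+1)²)` for `p ≥ 2`;
(b) `0 ≤ 1 − g_2^p ≤ 2π²/(p+1)²` for `p ≥ 3`.
In particular `g_0^p − g_1^p = O(p⁻²)` and `1 − g_2^p = O(p⁻²)` as `p → ∞`. -/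
theorem jackson_weights_quantitative_bounds :
    ((∀ p : ℕ, 2 ≤ p → 0 ≤ jacksonWeight p 0 - jacksonWeight p 1 ∧
        jacksonWeight p 0 - jacksonWeight p 1 ≤ Real.pi ^ 2 / (2 * ((p : ℝ) + 1) ^ 2)) ∧
      (∀ p : ℕ, 3 ≤ p → 0 ≤ 1 - jacksonWeight p 2 ∧
        1 - jacksonWeight p 2 ≤ 2 * Real.pi ^ 2 / ((p : ℝ) + 1) ^ 2)) ∧
    ((fun p : ℕ => jacksonWeight p 0 - jacksonWeight p 1)
        =O[atTop] fun p : ℕ => ((p : ℝ) ^ 2)⁻¹) ∧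
    ((fun p : ℕ => 1 - jacksonWeight p 2) =O[atTop] fun p : ℕ => ((p : ℝ) ^ 2)⁻¹) := by
  have ha := fun p (hp : 1 ≤ p) => jacksonWeight_zero_sub_one_mem_Icc hp
  have hb := fun p (hp : 1 ≤ p) => one_sub_jacksonWeight_two_mem_Icc hp
  refine ⟨⟨fun p hp => ha p (by omega), fun p hp => hb p (by omega)⟩, ?_, ?_⟩
  · refine isBigO_inv_sq_of_norm_le_div_succ_sq (C := π ^ 2 / 2)
      ((eventually_ge_atTop 1).mono fun p hp => ?_)
    rw [norm_of_nonneg (ha p hp).1, div_div]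
    exact (ha p hp).2
  · refine isBigO_inv_sq_of_norm_le_div_succ_sq (C := 2 * π ^ 2)
      ((eventually_ge_atTop 1).mono fun p hp => ?_)
    rw [norm_of_nonneg (hb p hp).1]
    exact (hb p hp).2
end

section
/- For every integer p ≥ 1 and all E, E' ∈ (−1, 1), the Jackson kernel is nonnegative: k_p^J(E, E') ≥ 0. -/
/-!
With `N = p + 1` and `a j = sin (π (j + 1) / N)`, a telescoping computation shows that
`g_k^p = (2 / N) ∑_j a j a (j + k)`, so `∑_k (2 g_k^p / (1 + δ_{0k})) cos (k x)` is
`(2 / N) |∑_j a j e^{i j x}|² ≥ 0`. Substituting `E = cos θ`, `E' = cos φ`, the product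
`T_k(E) T_k(E')` is the average of `cos (k (θ - φ))` and `cos (k (θ + φ))`, so the kernel is a
nonnegative multiple of a sum of two such nonnegative cosine sums.
-/

open MeasureTheory Real

open Finset Polynomial.Chebyshev

def autocorr (a : ℕ → ℝ) (p k : ℕ) : ℝ :=
  ∑ j ∈ range (p - k), a j * a (j + k)

section Autocorr

variable (a : ℕ → ℝ)

lemma autocorr_succ {p k : ℕ} (hk : k ≤ p) :
    autocorr a (p + 1) k = autocorr a p k + a (p - k) * a p := by
  rw [autocorr, autocorr, Nat.sub_add_comm hk, sum_range_succ, Nat.sub_add_cancel hk]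

lemma sum_autocorr_mul_cos (p : ℕ) (x : ℝ) :
    ∑ k ∈ range p, (if k = 0 then 1 else 2) * autocorr a p k * cos (k * x) =
      (∑ j ∈ range p, a j * cos (j * x)) ^ 2 + (∑ j ∈ range p, a j * sin (j * x)) ^ 2 := by
  induction p with
  | zero => simp
  | succ p ih =>
    set C := ∑ j ∈ range p, a j * cos (j * x)
    set S := ∑ j ∈ range p, a j * sin (j * x)
    have reflected : ∑ k ∈ range p, a (p - (k + 1)) * cos ((k + 1 : ℕ) * x)
        = cos (p * x) * C + sin (p * x) * S := by
      rw [mul_sum, mul_sum, ← sum_add_distrib, ← sum_range_reflect]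
      refine sum_congr rfl fun j hj => ?_
      have hjp := mem_range.mp hj
      rw [show p - (p - 1 - j + 1) = j by omega,
        show p - 1 - j + 1 = p - j by omega, Nat.cast_sub hjp.le, sub_mul, cos_sub]
      ring
    have new_terms :
        ∑ k ∈ range (p + 1), (if k = 0 then 1 else 2) * (a (p - k) * a p) * cos (k * x)
          = 2 * a p * ∑ k ∈ range p, a (p - (k + 1)) * cos ((k + 1 : ℕ) * x) + a p ^ 2 := by
      rw [sum_range_succ', mul_sum]
      congr 1
      · exact sum_congr rfl fun k _ => by simp only [Nat.succ_ne_zero, if_false]; ring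
      · simp only [if_true, Nat.cast_zero, zero_mul, cos_zero, Nat.sub_zero]; ring
    have old_terms :
        ∑ k ∈ range (p + 1), (if k = 0 then 1 else 2) * autocorr a p k * cos (k * x)
          = ∑ k ∈ range p, (if k = 0 then 1 else 2) * autocorr a p k * cos (k * x) := by
      simp [sum_range_succ, autocorr]
    calc _ = ∑ k ∈ range (p + 1), ((if k = 0 then 1 else 2) * autocorr a p k * cos (k * x)
            + (if k = 0 then 1 else 2) * (a (p - k) * a p) * cos (k * x)) :=
          sum_congr rfl fun k hk => by
            rw [autocorr_succ a (Nat.lt_succ_iff.mp (mem_range.mp hk))]; ring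
      _ = _ := by
        rw [sum_add_distrib, old_terms, new_terms, reflected, ih, sum_range_succ, sum_range_succ]
        linear_combination -(a p) ^ 2 * sin_sq_add_cos_sq (p * x)

lemma sum_autocorr_mul_cos_nonneg (p : ℕ) (x : ℝ) :
    0 ≤ ∑ k ∈ range p, (if k = 0 then 1 else 2) * autocorr a p k * cos (k * x) := by
  rw [sum_autocorr_mul_cos]
  positivity

end Autocorr

noncomputable def sineWindow (p j : ℕ) : ℝ := sin (π * (j + 1) / (p + 1))

lemma two_mul_autocorr_sineWindow {p k : ℕ} (hp : 0 < p) (hk : k ≤ p) :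
    2 * autocorr (sineWindow p) p k
      = (p + 1 - k) * cos (π * k / (p + 1)) + sin (π * k / (p + 1)) * cot (π / (p + 1)) := by
  set c := π / (p + 1) with hc
  have hp1 : (0 : ℝ) < p + 1 := by positivity
  have hpc : (p + 1) * c = π := by rw [hc]; field_simp
  have hkc : π * k / (p + 1) = k * c := by rw [hc]; ring
  have hsin : sin c ≠ 0 := by
    refine (sin_pos_of_pos_of_lt_pi (by positivity) ?_).ne'
    rw [div_lt_iff₀ hp1]
    nlinarith [pi_pos, (Nat.one_le_cast (α := ℝ)).mpr hp]
  have product_to_sum : ∀ j : ℕ, 2 * (sineWindow p j * sineWindow p (j + k))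
      = cos (k * c) - cos (2 * c * j + (k * c + 2 * c)) := by
    intro j
    rw [mul_comm (sineWindow p j), ← mul_assoc, sineWindow, sineWindow, two_mul_sin_mul_sin]
    congr 2 <;> rw [hc] <;> push_cast <;> ring
  have dirichlet : ∑ j ∈ range (p - k), cos (2 * c * j + (k * c + 2 * c))
      = - sin (k * c + c) / sin c := by
    refine eq_div_of_mul_eq hsin ?_
    have h := sin_mul_sum_cos (p - k) (2 * c) (k * c + 2 * c)
    rwa [Nat.cast_sub hk, show 2 * c / 2 = c by ring,
      show (p - k : ℝ) * (2 * c) / 2 = π - (k * c + c) by linear_combination hpc,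
      show (p - k - 1 : ℝ) * (2 * c) / 2 + (k * c + 2 * c) = π by linear_combination hpc,
      sin_pi_sub, cos_pi, mul_neg_one, mul_comm] at h
  rw [autocorr, mul_sum, sum_congr rfl fun j _ => product_to_sum j, sum_sub_distrib, sum_const,
    card_range, nsmul_eq_mul, Nat.cast_sub hk, hkc,
    dirichlet, sin_add, cot_eq_cos_div_sin]
  field_simp
  ring

lemma jacksonWeight_eq_autocorr {p k : ℕ} (hk : k < p) :
    jacksonWeight p k = 2 / (p + 1) * autocorr (sineWindow p) p k := by
  rw [jacksonWeight, div_mul_eq_mul_div, two_mul_autocorr_sineWindow (by omega) hk.le]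

lemma sum_jacksonWeight_mul_cos_nonneg (p : ℕ) (x : ℝ) :
    0 ≤ ∑ k ∈ range p,
      (2 * jacksonWeight p k / (1 + if k = 0 then (1 : ℝ) else 0)) * cos (k * x) := by
  calc (0 : ℝ)
      ≤ 2 / (p + 1) * ∑ k ∈ range p, (if k = 0 then 1 else 2) * autocorr (sineWindow p) p k
          * cos (k * x) := mul_nonneg (by positivity) (sum_autocorr_mul_cos_nonneg _ p x)
    _ = _ := by
      rw [mul_sum]
      refine sum_congr rfl fun k hk => ?_
      rw [jacksonWeight_eq_autocorr (mem_range.mp hk)]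
      split_ifs <;> ring

theorem jackson_kernel_nonneg_general
    (p : ℕ) (E E' : ℝ)
    (hE : E ∈ Set.Ioo (-1 : ℝ) 1) (hE' : E' ∈ Set.Ioo (-1 : ℝ) 1) :
    0 ≤ jacksonKernel p E E' := by
  refine mul_nonneg (by positivity) ?_
  rw [← cos_arccos hE.1.le hE.2.le, ← cos_arccos hE'.1.le hE'.2.le]
  set θ := arccos E
  set φ := arccos E'
  have chebyshev_product : ∀ k : ℕ, (T ℝ k).eval (cos θ) * (T ℝ k).eval (cos φ)
      = (cos (k * (θ - φ)) + cos (k * (θ + φ))) / 2 := by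
    intro k
    rw [T_real_cos, T_real_cos, Int.cast_natCast, mul_sub, mul_add, cos_sub, cos_add]
    ring
  simp_rw [mul_assoc _ ((T ℝ _).eval _), chebyshev_product, mul_div, ← sum_div,
    mul_add (2 * jacksonWeight p _ / _), sum_add_distrib]
  have := sum_jacksonWeight_mul_cos_nonneg p (θ - φ)
  have := sum_jacksonWeight_mul_cos_nonneg p (θ + φ)
  positivity

/-- **Positivity of the Jackson kernel:** for every `p ≥ 1` and `E, E' ∈ (−1, 1)`,
`k_p^J(E, E') ≥ 0`. -/
theorem jackson_kernel_nonneg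
    (p : ℕ) (hp : 1 ≤ p) (E E' : ℝ)
    (hE : E ∈ Set.Ioo (-1 : ℝ) 1) (hE' : E' ∈ Set.Ioo (-1 : ℝ) 1) :
    0 ≤ jacksonKernel p E E' :=
  jackson_kernel_nonneg_general p E E' hE hE'
end
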